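/- arXiv:1810.08176 — 2 statements merged into one kernel-verified Lean document; each statement's English description precedes it below -/
import Mathlib

section
/- Let (C, d, U, D₁, D₂) be a Floer datum over a field Λ, with Ĉ, Č, C̄, the maps i, j, p, and the maps 𝔨, 𝔩, 𝔯 as defined in the context. Then the following three identities hold: p ∘ j + 𝔨 ∘ ď = 0, i ∘ p + 𝔩 ∘ d̂ + ď ∘ 𝔩 = 0, and j ∘ i + d̂ ∘ 𝔯 = 0. -/
noncomputable section

variable (Λ : Type*) (V : Type*) [Field Λ] [AddCommGroup V] [Module Λ V]

/-- A Floer datum over the field `Λ`. -/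
structure FloerDatum where
  gr : ZMod 8 → Submodule Λ V
  internal : DirectSum.IsInternal gr
  d : V →ₗ[Λ] V
  U : V →ₗ[Λ] V
  D₁ : V →ₗ[Λ] Λ
  D₂ : Λ →ₗ[Λ] V
  d_mem : ∀ (i : ZMod 8), ∀ v ∈ gr i, d v ∈ gr (i - 1)
  U_mem : ∀ (i : ZMod 8), ∀ v ∈ gr i, U v ∈ gr (i - 4)
  D₁_vanish : ∀ (i : ZMod 8), i ≠ 1 → ∀ v ∈ gr i, D₁ v = 0
  D₂_mem : ∀ a : Λ, D₂ a ∈ gr 4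
  d_d : d ∘ₗ d = 0
  D₁_d : D₁ ∘ₗ d = 0
  d_D₂ : d ∘ₗ D₂ = 0
  U_rel : U ∘ₗ d - d ∘ₗ U + D₂ ∘ₗ D₁ = 0

variable {Λ V}
variable {W : Type*} [AddCommGroup W] [Module Λ W]
variable {M : Type*} [AddCommGroup M] [Module Λ M]

/-- `p = Σ aᵢ xⁱ ↦ Σ f i aᵢ`, as a linear map on polynomials. -/
def polySum (f : ℕ → (Λ →ₗ[Λ] W)) : Polynomial Λ →ₗ[Λ] W where
  toFun p := p.sum fun i a => f i a
  map_add' p q :=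
    Polynomial.sum_add_index p q _ (fun i => map_zero (f i)) (fun i b c => map_add (f i) b c)
  map_smul' a p := by
    show (a • p).sum (fun i b => f i b) = a • p.sum fun i b => f i b
    rw [Polynomial.sum_smul_index p a _ (fun i => map_zero (f i)),
      Polynomial.sum, Polynomial.sum, Finset.smul_sum]
    exact Finset.sum_congr rfl fun n _ => by rw [← smul_eq_mul, map_smul]

/-- The differential `d̂` on `Ĉ = C ⊕ Λ[x]`. -/
def hatd (F : FloerDatum Λ V) : (V × Polynomial Λ) →ₗ[Λ] (V × Polynomial Λ) :=
  ((F.d ∘ₗ LinearMap.fst Λ V (Polynomial Λ))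
    - (polySum fun i => (F.U ^ i) ∘ₗ F.D₂) ∘ₗ LinearMap.snd Λ V (Polynomial Λ)).prod 0

/-- The map `X̂(α, p) = (U α, D₁ α + x·p)` on `Ĉ`. -/
def hatX (F : FloerDatum Λ V) : (V × Polynomial Λ) →ₗ[Λ] (V × Polynomial Λ) :=
  (F.U ∘ₗ LinearMap.fst Λ V (Polynomial Λ)).prod
    ((Algebra.linearMap Λ (Polynomial Λ)) ∘ₗ F.D₁ ∘ₗ LinearMap.fst Λ V (Polynomial Λ)
      + (LinearMap.mulLeft Λ (Polynomial.X : Polynomial Λ)) ∘ₗ LinearMap.snd Λ V (Polynomial Λ))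

/-- Package a family of `Λ`-linear coefficient functionals into a linear map to power series.
We use `PowerSeries Λ` (in the variable `x⁻¹`) as a model for `x⁻¹Λ[[x⁻¹]]`: a power series `q`
represents the series `Σ_{n≥0} (coeff n q) x^{-(n+1)}`. -/
def toPS (c : ℕ → (M →ₗ[Λ] Λ)) : M →ₗ[Λ] PowerSeries Λ where
  toFun m := PowerSeries.mk fun n => c n m
  map_add' x y := by
    ext n
    simp [PowerSeries.coeff_mk]
  map_smul' a x := by
    ext n
    simp [PowerSeries.coeff_mk]

/-- The differential `ď` on `Č = C ⊕ x⁻¹Λ[[x⁻¹]]`. -/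
def checkd (F : FloerDatum Λ V) : (V × PowerSeries Λ) →ₗ[Λ] (V × PowerSeries Λ) :=
  (F.d ∘ₗ LinearMap.fst Λ V (PowerSeries Λ)).prod
    ((toPS fun n => F.D₁ ∘ₗ (F.U ^ n)) ∘ₗ LinearMap.fst Λ V (PowerSeries Λ))

/-- The map `X̌` on `Č`. -/
def checkX (F : FloerDatum Λ V) : (V × PowerSeries Λ) →ₗ[Λ] (V × PowerSeries Λ) :=
  (F.U ∘ₗ LinearMap.fst Λ V (PowerSeries Λ)
      + F.D₂ ∘ₗ (PowerSeries.coeff (R := Λ) 0) ∘ₗ LinearMap.snd Λ V (PowerSeries Λ)).prod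
    ((toPS fun n => PowerSeries.coeff (R := Λ) (n + 1)) ∘ₗ LinearMap.snd Λ V (PowerSeries Λ))

/-!
We model `C̄ = Λ((x⁻¹))` by `LaurentSeries Λ = HahnSeries ℤ Λ` in the variable `t = x⁻¹`;
a Laurent series `z` represents `Σ_i aᵢ xⁱ` with `aᵢ = z.coeff (-i)`, and `x` acts by
multiplication by `xbar = single (-1) 1`.
-/

/-- The element `x` of `C̄ = Λ((x⁻¹))`. -/
def xbar : LaurentSeries Λ := HahnSeries.single (-1 : ℤ) (1 : Λ)

lemma headSupport_finite (f : ℕ → (Λ →ₗ[Λ] W)) (z : LaurentSeries Λ) :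
    (Function.support fun n : ℕ => f n (z.coeff (-(n : ℤ)))).Finite := by
  have h1 : (z.support ∩ Set.Iic (0 : ℤ)).Finite := by
    rcases Set.eq_empty_or_nonempty (z.support ∩ Set.Iic (0 : ℤ)) with h | h
    · simp [h]
    · have hwf : (z.support ∩ Set.Iic (0 : ℤ)).IsWF :=
        z.isWF_support.mono Set.inter_subset_left
      exact Set.Finite.subset (Set.finite_Icc (hwf.min h) 0)
        (fun y hy => Set.mem_Icc.mpr ⟨hwf.min_le h hy, hy.2⟩)
  have hinj : Function.Injective fun n : ℕ => -(n : ℤ) := fun a b hab => by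
    simpa using hab
  refine Set.Finite.subset (Set.Finite.preimage (hinj.injOn) h1) ?_
  intro n hn
  have hz : z.coeff (-(n : ℤ)) ≠ 0 := by
    intro h0
    apply hn
    simp [h0]
  exact Set.mem_preimage.mpr ⟨hz, by simp⟩

/-- `z = Σ aᵢ xⁱ ↦ Σ_{i ≥ 0} f i aᵢ`, as a linear map on Laurent series (the sum is finite). -/
def headMap (f : ℕ → (Λ →ₗ[Λ] W)) : LaurentSeries Λ →ₗ[Λ] W where
  toFun z := ∑ᶠ n : ℕ, f n (z.coeff (-(n : ℤ)))
  map_add' z w := by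
    show (∑ᶠ n : ℕ, f n ((z + w).coeff (-(n : ℤ))))
        = (∑ᶠ n : ℕ, f n (z.coeff (-(n : ℤ)))) + ∑ᶠ n : ℕ, f n (w.coeff (-(n : ℤ)))
    rw [← finsum_add_distrib (headSupport_finite f z) (headSupport_finite f w)]
    exact finsum_congr fun n => by rw [HahnSeries.coeff_add, map_add]
  map_smul' a z := by
    show (∑ᶠ n : ℕ, f n ((a • z).coeff (-(n : ℤ)))) = a • ∑ᶠ n : ℕ, f n (z.coeff (-(n : ℤ)))
    rw [smul_finsum]
    exact finsum_congr fun n => by rw [HahnSeries.coeff_smul, map_smul]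

/-- The coefficient of `xⁱ` (i.e. of `t^{-i}`), as a linear functional on Laurent series. -/
def lcoeff (k : ℤ) : LaurentSeries Λ →ₗ[Λ] Λ where
  toFun z := z.coeff k
  map_add' _ _ := HahnSeries.coeff_add
  map_smul' _ _ := HahnSeries.coeff_smul

/-- A power series `q`, viewed as `Σ_{n≥0} (coeff n q) x^{-(n+1)}`, embedded into `Λ((x⁻¹))`
(multiplying the usual embedding by `t = x⁻¹`). -/
def psToLaurentShift : PowerSeries Λ →ₗ[Λ] LaurentSeries Λ where
  toFun q := HahnSeries.single (1 : ℤ) (1 : Λ) * (HahnSeries.ofPowerSeries ℤ Λ q)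
  map_add' q r := by
    show HahnSeries.single (1 : ℤ) (1 : Λ) * (HahnSeries.ofPowerSeries ℤ Λ (q + r))
        = HahnSeries.single (1 : ℤ) (1 : Λ) * (HahnSeries.ofPowerSeries ℤ Λ q)
          + HahnSeries.single (1 : ℤ) (1 : Λ) * (HahnSeries.ofPowerSeries ℤ Λ r)
    rw [map_add, mul_add]
  map_smul' a q := by
    show HahnSeries.single (1 : ℤ) (1 : Λ) * (HahnSeries.ofPowerSeries ℤ Λ (a • q))
        = a • (HahnSeries.single (1 : ℤ) (1 : Λ) * HahnSeries.ofPowerSeries ℤ Λ q)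
    rw [PowerSeries.smul_eq_C_mul, map_mul, HahnSeries.ofPowerSeries_C, HahnSeries.C_apply,
      mul_left_comm, HahnSeries.single_zero_mul_eq_smul]

/-- A polynomial `Σ aᵢ xⁱ`, viewed inside `Λ((x⁻¹))` by substituting `x = t⁻¹`. -/
def polyToLaurent : Polynomial Λ →ₗ[Λ] LaurentSeries Λ :=
  polySum fun n => LinearMap.smulRight (LinearMap.id : Λ →ₗ[Λ] Λ) ((xbar : LaurentSeries Λ) ^ n)

/-- The map `i : C̄ → Č`. -/
def imap (F : FloerDatum Λ V) : LaurentSeries Λ →ₗ[Λ] (V × PowerSeries Λ) :=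
  (headMap fun n => (F.U ^ n) ∘ₗ F.D₂).prod
    (toPS fun n => lcoeff ((n : ℤ) + 1))

/-- The map `j : Č → Ĉ`, `(α, q) ↦ (α, 0)`. -/
def jmap : (V × PowerSeries Λ) →ₗ[Λ] (V × Polynomial Λ) :=
  (LinearMap.fst Λ V (PowerSeries Λ)).prod 0

/-- The map `p : Ĉ → C̄`,
`(α, Σ_{i≥0} aᵢ xⁱ) ↦ Σ_{i≤-1} D₁(U^{-i-1} α) xⁱ + Σ_{i≥0} aᵢ xⁱ`. -/
def pmap (F : FloerDatum Λ V) : (V × Polynomial Λ) →ₗ[Λ] LaurentSeries Λ :=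
  (psToLaurentShift ∘ₗ (toPS fun n => F.D₁ ∘ₗ (F.U ^ n))) ∘ₗ LinearMap.fst Λ V (Polynomial Λ)
    + polyToLaurent ∘ₗ LinearMap.snd Λ V (Polynomial Λ)

/-- The map `𝔨 : Č → C̄`, `(α, Σ_{i≤-1} aᵢ xⁱ) ↦ -Σ_{i≤-1} aᵢ xⁱ`. -/
def kmap : (V × PowerSeries Λ) →ₗ[Λ] LaurentSeries Λ :=
  -(psToLaurentShift ∘ₗ LinearMap.snd Λ V (PowerSeries Λ))

/-- The map `𝔩 : Ĉ → Č`, `(α, p) ↦ (ε α, 0)`, for a sign map `ε`. -/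
def lmap (ε : V →ₗ[Λ] V) : (V × Polynomial Λ) →ₗ[Λ] (V × PowerSeries Λ) :=
  (ε ∘ₗ LinearMap.fst Λ V (Polynomial Λ)).prod 0

/-- The map `𝔯 : C̄ → Ĉ`, `Σ_{i≤N} aᵢ xⁱ ↦ (0, Σ_{0≤i≤N} aᵢ xⁱ)`. -/
def rmap : LaurentSeries Λ →ₗ[Λ] (V × Polynomial Λ) :=
  (0 : LaurentSeries Λ →ₗ[Λ] V).prod
    (headMap fun n => LinearMap.smulRight (LinearMap.id : Λ →ₗ[Λ] Λ) ((Polynomial.X : Polynomial Λ) ^ n))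

/-!
The sign map `ε` is multiplicative along the grading because `8` is even, so it anticommutes
with `d` (degree `-1`), commutes with `U` (degree `-4`), fixes the image of `D₂` (degree `4`) and
is `-1` on the only degree `D₁` sees. In `Λ((x⁻¹))` the polynomial part `Λ[x]` and the tail
`x⁻¹Λ[[x⁻¹]]` occupy complementary ranges of exponents, so `i ∘ p` splits into
`(Σ Uⁱ D₂ aᵢ, Σ D₁ Uⁿ α x^{-n-1})`, which the two remaining terms cancel.
-/

lemma neg_one_pow_zmod_val_add {R : Type*} [Ring R] {n : ℕ} [NeZero n]
    (hn : Even n) (a b : ZMod n) : (-1 : R) ^ (a + b).val = (-1) ^ a.val * (-1) ^ b.val := by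
  rw [ZMod.val_add, neg_one_pow_eq_pow_mod_two, Nat.mod_mod_of_dvd _ hn.two_dvd,
    ← neg_one_pow_eq_pow_mod_two, pow_add]

section Series

lemma toPS_coeff (c : ℕ → (M →ₗ[Λ] Λ)) (m : M) (n : ℕ) :
    PowerSeries.coeff n (toPS c m) = c n m := by
  simp [toPS]

lemma headMap_apply (f : ℕ → (Λ →ₗ[Λ] W)) (z : LaurentSeries Λ) :
    headMap f z = ∑ᶠ n : ℕ, f n (z.coeff (-(n : ℤ))) :=
  rfl

lemma polySum_monomial (f : ℕ → (Λ →ₗ[Λ] W)) (n : ℕ) (a : Λ) :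
    polySum f (Polynomial.monomial n a) = f n a :=
  Polynomial.sum_monomial_index a (fun i b => f i b) (map_zero _)

lemma comp_polySum (g : W →ₗ[Λ] M) (f : ℕ → (Λ →ₗ[Λ] W)) :
    g ∘ₗ polySum f = polySum (fun n => g ∘ₗ f n) :=
  Polynomial.lhom_ext' fun n => LinearMap.ext fun a => by
    simp only [LinearMap.comp_apply, polySum_monomial]

lemma polyToLaurent_monomial (n : ℕ) (a : Λ) :
    polyToLaurent (Polynomial.monomial n a) = a • HahnSeries.single (-(n : ℤ)) 1 := by
  simp [polyToLaurent, polySum_monomial, xbar, HahnSeries.single_pow]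

lemma psToLaurentShift_coeff_of_nonpos (q : PowerSeries Λ) {k : ℤ} (hk : k ≤ 0) :
    (psToLaurentShift q).coeff k = 0 := by
  obtain ⟨m, rfl⟩ : ∃ m : ℤ, k = m + 1 := ⟨k - 1, by ring⟩
  rw [psToLaurentShift, LinearMap.coe_mk, AddHom.coe_mk, HahnSeries.coeff_single_mul_add,
    one_mul, HahnSeries.ofPowerSeries_apply, HahnSeries.embDomain_of_notMem_range]
  rintro ⟨n, hn⟩
  have : (n : ℤ) = m := hn
  omega

lemma psToLaurentShift_coeff_natCast_add_one (q : PowerSeries Λ) (n : ℕ) :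
    (psToLaurentShift q).coeff ((n : ℤ) + 1) = PowerSeries.coeff n q := by
  rw [psToLaurentShift, LinearMap.coe_mk, AddHom.coe_mk, HahnSeries.coeff_single_mul_add, one_mul,
    HahnSeries.ofPowerSeries_apply_coeff]

lemma headMap_comp_psToLaurentShift (f : ℕ → (Λ →ₗ[Λ] W)) :
    headMap f ∘ₗ psToLaurentShift = 0 :=
  LinearMap.ext fun q => finsum_eq_zero_of_forall_eq_zero fun n => by
    rw [psToLaurentShift_coeff_of_nonpos q (by omega), map_zero]

lemma toPS_lcoeff_comp_psToLaurentShift :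
    (toPS fun n => lcoeff ((n : ℤ) + 1)) ∘ₗ psToLaurentShift =
      (LinearMap.id : PowerSeries Λ →ₗ[Λ] _) :=
  LinearMap.ext fun q => PowerSeries.ext fun n => by
    rw [LinearMap.comp_apply, toPS_coeff, lcoeff, LinearMap.coe_mk, AddHom.coe_mk,
      psToLaurentShift_coeff_natCast_add_one, LinearMap.id_apply]

lemma headMap_comp_polyToLaurent (f : ℕ → (Λ →ₗ[Λ] W)) :
    headMap f ∘ₗ polyToLaurent = polySum f :=
  Polynomial.lhom_ext' fun n => LinearMap.ext fun a => by
    simp only [LinearMap.comp_apply, polyToLaurent_monomial, polySum_monomial]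
    rw [headMap_apply, finsum_eq_single _ n fun m hm => by
        rw [HahnSeries.coeff_smul, HahnSeries.coeff_single_of_ne (by simpa using hm), smul_zero,
          map_zero]]
    rw [HahnSeries.coeff_smul, HahnSeries.coeff_single_same, smul_eq_mul, mul_one]

lemma toPS_lcoeff_comp_polyToLaurent :
    (toPS fun n => lcoeff ((n : ℤ) + 1)) ∘ₗ polyToLaurent =
      (0 : Polynomial Λ →ₗ[Λ] PowerSeries Λ) :=
  Polynomial.lhom_ext' fun m => LinearMap.ext fun a => PowerSeries.ext fun n => by
    simp only [LinearMap.comp_apply, polyToLaurent_monomial]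
    rw [toPS_coeff, lcoeff, LinearMap.coe_mk, AddHom.coe_mk, HahnSeries.coeff_smul,
      HahnSeries.coeff_single_of_ne (by omega), smul_zero, LinearMap.zero_apply, map_zero]

lemma polySum_comp_headMap_X_pow (f : ℕ → (Λ →ₗ[Λ] W)) :
    polySum f ∘ₗ
        headMap (fun n => LinearMap.smulRight LinearMap.id ((Polynomial.X : Polynomial Λ) ^ n)) =
      headMap f :=
  LinearMap.ext fun z => by
    rw [LinearMap.comp_apply, headMap_apply, headMap_apply,
      map_finsum _ (by exact headSupport_finite _ z)]
    refine finsum_congr fun n => ?_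
    rw [LinearMap.smulRight_apply, LinearMap.id_apply, Polynomial.smul_X_eq_monomial,
      polySum_monomial]

end Series

namespace FloerDatum

variable (F : FloerDatum Λ V)

lemma ext_of_gr {f g : V →ₗ[Λ] W} (h : ∀ k, ∀ v ∈ F.gr k, f v = g v) : f = g :=
  LinearMap.ext_on (by rw [← Submodule.iSup_eq_span, F.internal.submodule_iSup_eq_top])
    fun v hv => by
      obtain ⟨k, hk⟩ := Set.mem_iUnion.mp hv
      exact h k v hk

section Sign

variable {F} {ε : V →ₗ[Λ] V} (hε : ∀ k, ∀ v ∈ F.gr k, ε v = ((-1 : Λ) ^ k.val) • v)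
include hε

lemma sign_comp_d : ε ∘ₗ F.d = -(F.d ∘ₗ ε) :=
  F.ext_of_gr fun k v hv => by
    have hk := neg_one_pow_zmod_val_add (R := Λ) (by decide) (k - 1) 1
    rw [sub_add_cancel, show (1 : ZMod 8).val = 1 from rfl, pow_one, mul_neg_one] at hk
    rw [LinearMap.comp_apply, LinearMap.neg_apply, LinearMap.comp_apply,
      hε _ _ (F.d_mem k v hv), hε k v hv, map_smul, hk, neg_smul, neg_neg]

lemma sign_comp_U : ε ∘ₗ F.U = F.U ∘ₗ ε :=
  F.ext_of_gr fun k v hv => by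
    have hk := neg_one_pow_zmod_val_add (R := Λ) (by decide) (k - 4) 4
    rw [sub_add_cancel, show (4 : ZMod 8).val = 4 from rfl, (by decide : Even 4).neg_one_pow,
      mul_one] at hk
    rw [LinearMap.comp_apply, LinearMap.comp_apply, hε _ _ (F.U_mem k v hv), hε k v hv, map_smul,
      hk]

lemma sign_comp_D₂ : ε ∘ₗ F.D₂ = F.D₂ :=
  LinearMap.ext fun a => by
    rw [LinearMap.comp_apply, hε 4 _ (F.D₂_mem a), show (4 : ZMod 8).val = 4 from rfl]
    norm_num

lemma D₁_comp_sign : F.D₁ ∘ₗ ε = -F.D₁ :=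
  F.ext_of_gr fun k v hv => by
    rw [LinearMap.comp_apply, LinearMap.neg_apply, hε k v hv, map_smul]
    by_cases hk : k = 1
    · subst hk
      norm_num [show (1 : ZMod 8).val = 1 from rfl]
    · simp [F.D₁_vanish k hk v hv]

lemma sign_comp_U_pow (n : ℕ) : ε ∘ₗ (F.U ^ n) = (F.U ^ n) ∘ₗ ε := by
  induction n with
  | zero => rfl
  | succ n ih =>
    rw [pow_succ, Module.End.mul_eq_comp, ← LinearMap.comp_assoc, ih, LinearMap.comp_assoc,
      sign_comp_U hε, ← LinearMap.comp_assoc]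

lemma sign_comp_polySum_U_pow_D₂ :
    ε ∘ₗ polySum (fun n => (F.U ^ n) ∘ₗ F.D₂) = polySum (fun n => (F.U ^ n) ∘ₗ F.D₂) := by
  refine (comp_polySum _ _).trans (congrArg polySum (funext fun n => ?_))
  rw [← LinearMap.comp_assoc, sign_comp_U_pow hε, LinearMap.comp_assoc, sign_comp_D₂ hε]

lemma toPS_D₁_U_pow_comp_sign :
    (toPS fun n => F.D₁ ∘ₗ (F.U ^ n)) ∘ₗ ε = -toPS fun n => F.D₁ ∘ₗ (F.U ^ n) :=
  LinearMap.ext fun α => PowerSeries.ext fun n => by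
    rw [LinearMap.comp_apply, LinearMap.neg_apply, map_neg, toPS_coeff, toPS_coeff,
      ← LinearMap.comp_apply _ ε, LinearMap.comp_assoc, ← sign_comp_U_pow hε,
      ← LinearMap.comp_assoc, D₁_comp_sign hε]
    rfl

end Sign

lemma pmap_comp_jmap_add_kmap_comp_checkd : pmap F ∘ₗ jmap + kmap ∘ₗ checkd F = 0 :=
  LinearMap.ext fun _ => by simp [pmap, jmap, kmap, checkd]

lemma imap_comp_pmap :
    imap F ∘ₗ pmap F =
      ((polySum fun n => (F.U ^ n) ∘ₗ F.D₂) ∘ₗ LinearMap.snd Λ V (Polynomial Λ)).prod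
        ((toPS fun n => F.D₁ ∘ₗ (F.U ^ n)) ∘ₗ LinearMap.fst Λ V (Polynomial Λ)) := by
  simp only [imap, pmap, LinearMap.prod_comp, LinearMap.comp_add, ← LinearMap.comp_assoc,
    headMap_comp_psToLaurentShift, headMap_comp_polyToLaurent, toPS_lcoeff_comp_psToLaurentShift,
    toPS_lcoeff_comp_polyToLaurent, LinearMap.zero_comp, LinearMap.id_comp]
  exact LinearMap.ext fun _ => Prod.ext (zero_add _) (add_zero _)

lemma imap_comp_pmap_add_lmap_comp_hatd_add_checkd_comp_lmap {ε : V →ₗ[Λ] V}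
    (hε : ∀ k, ∀ v ∈ F.gr k, ε v = ((-1 : Λ) ^ k.val) • v) :
    imap F ∘ₗ pmap F + lmap ε ∘ₗ hatd F + checkd F ∘ₗ lmap ε = 0 := by
  rw [imap_comp_pmap]
  refine LinearMap.ext fun ⟨α, P⟩ => Prod.ext ?_ ?_
  · have hd := LinearMap.congr_fun (sign_comp_d hε) α
    have hD₂ := LinearMap.congr_fun (sign_comp_polySum_U_pow_D₂ hε) P
    simp only [LinearMap.comp_apply, LinearMap.neg_apply] at hd hD₂
    simp [lmap, hatd, checkd, hd, hD₂]
  · have hD₁ := LinearMap.congr_fun (toPS_D₁_U_pow_comp_sign hε) α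
    simp only [LinearMap.comp_apply, LinearMap.neg_apply] at hD₁
    simp [lmap, hatd, checkd, hD₁]

lemma jmap_comp_imap_add_hatd_comp_rmap : jmap ∘ₗ imap F + hatd F ∘ₗ rmap = 0 :=
  LinearMap.ext fun z => by
    have h := LinearMap.congr_fun (polySum_comp_headMap_X_pow fun n => (F.U ^ n) ∘ₗ F.D₂) z
    rw [LinearMap.comp_apply] at h
    simp [jmap, imap, hatd, rmap, h]

end FloerDatum

/-- The identities `p ∘ j + 𝔨 ∘ ď = 0`, `i ∘ p + 𝔩 ∘ d̂ + ď ∘ 𝔩 = 0` and `j ∘ i + d̂ ∘ 𝔯 = 0`,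
where `ε : C → C` is the `Λ`-linear map acting on `C_k` by `(-1)^k`. -/
theorem stmt_4 (F : FloerDatum Λ V) (ε : V →ₗ[Λ] V)
    (hε : ∀ (k : ZMod 8), ∀ v ∈ F.gr k, ε v = ((-1 : Λ) ^ k.val) • v) :
    pmap F ∘ₗ jmap + kmap ∘ₗ checkd F = 0 ∧
    imap F ∘ₗ pmap F + lmap ε ∘ₗ hatd F + checkd F ∘ₗ lmap ε = 0 ∧
    jmap ∘ₗ imap F + hatd F ∘ₗ rmap = 0 :=
  ⟨F.pmap_comp_jmap_add_kmap_comp_checkd,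
    F.imap_comp_pmap_add_lmap_comp_hatd_add_checkd_comp_lmap hε,
    F.jmap_comp_imap_add_hatd_comp_rmap⟩
end
end

section
/- Let n ≥ 3 and let a₁, …, a_n be pairwise coprime integers with a_i ≥ 2 for each i. Then the real number R(a₁,…,a_n) is an odd integer not smaller than −1: there exists an integer m ≥ 0 such that R(a₁,…,a_n) = 2m − 1. -/
open Real

noncomputable section

/-- The `i`-th summand of the Fintushel–Stern invariant:
`(2/m)·Σ_{k=1}^{m-1} cot(πkA/m²)·cot(πk/m)·sin²(πk/m)`, where `A` is the (real) product of
the multiplicities. -/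
def fsTerm (A : ℝ) (m : ℕ) : ℝ :=
  (2 / (m : ℝ)) * ∑ k ∈ Finset.Icc 1 (m - 1),
    Real.cot (π * k * A / (m : ℝ) ^ 2) * Real.cot (π * k / (m : ℝ)) *
      Real.sin (π * k / (m : ℝ)) ^ 2

/-- The Fintushel–Stern invariant
`R(a₁,…,aₙ) = 2/a - 3 + n + Σᵢ (2/aᵢ)·Σ_{k=1}^{aᵢ-1} cot(πka/aᵢ²)·cot(πk/aᵢ)·sin²(πk/aᵢ)`. -/
def FSR (n : ℕ) (a : Fin n → ℕ) : ℝ :=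
  2 / (∏ j, (a j : ℝ)) - 3 + n + ∑ i, fsTerm (∏ j, (a j : ℝ)) (a i)

/-!
Write `a = aᵢ bᵢ` and let `cᵢ ∈ (0, aᵢ)` be the inverse of `bᵢ` modulo `aᵢ`. Since
`cot x sin² x = sin (2x) / 2` and everything is `aᵢ`-periodic in `k`, the substitution
`k ↦ k bᵢ mod aᵢ` turns the `i`-th summand into `(1/aᵢ) Σₖ cot (πk/aᵢ) sin (2πk cᵢ/aᵢ)`. Telescoping
`cot x sin (2jx)` into a sum of cosines and using `Σₖ cos (2πlk/m) = 0` for `m ∤ l` evaluates this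
to `1 - 2cᵢ/aᵢ`. Hence `R = 2n - 3 - 2(Σ cᵢ bᵢ - 1)/a`, where `Σ cᵢ bᵢ ≡ 1 (mod a)` by the Chinese
remainder theorem and `Σ cᵢ bᵢ - 1 < n a` because `cᵢ < aᵢ`.
-/

open Finset Function

namespace Real

lemma cot_periodic : Periodic cot π := fun x => by
  simp only [cot_eq_cos_div_sin, sin_add_pi, cos_add_pi, neg_div_neg_eq]

lemma cot_mul_sin_sq (x : ℝ) : cot x * sin x ^ 2 = sin (2 * x) / 2 := by
  rw [cot_eq_cos_div_sin, sin_two_mul]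
  rcases eq_or_ne (sin x) 0 with h | h
  · simp [h]
  · field_simp

lemma sin_two_nat_mul_mul_cos (j : ℕ) (x : ℝ) :
    sin (2 * j * x) * cos x = sin x * ∑ l ∈ range j, (cos (2 * l * x) + cos (2 * (l + 1) * x)) := by
  have step (l : ℕ) : sin x * (cos (2 * l * x) + cos (2 * (l + 1) * x))
      = sin (2 * (l + 1 : ℕ) * x) * cos x - sin (2 * l * x) * cos x := by
    have h₁ : 2 * l * x = (2 * l + 1) * x - x := by ring
    have h₂ : 2 * ((l + 1 : ℕ) : ℝ) * x = (2 * l + 1) * x + x := by push_cast; ring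
    have h₃ : 2 * ((l : ℝ) + 1) * x = (2 * l + 1) * x + x := by ring
    rw [h₁, h₂, h₃, sin_add, sin_sub, cos_add, cos_sub]
    ring
  rw [mul_sum, sum_congr rfl fun l _ => step l, sum_range_sub (fun l => sin (2 * l * x) * cos x)]
  simp

lemma sum_range_cos_two_mul_pi_mul_div {m l : ℕ} (hml : ¬ m ∣ l) :
    ∑ k ∈ range m, cos (2 * l * (π * k / m)) = 0 := by
  rcases eq_or_ne m 0 with rfl | hm
  · simp
  have hζ := Complex.isPrimitiveRoot_exp m hm
  have hz : Complex.exp (2 * π * Complex.I / m) ^ l ≠ 1 := fun h =>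
    hml ((hζ.pow_eq_one_iff_dvd l).1 h)
  have hzm : (Complex.exp (2 * π * Complex.I / m) ^ l) ^ m = 1 := by
    rw [← pow_mul, mul_comm l m, pow_mul, hζ.pow_eq_one, one_pow]
  have hre (k : ℕ) :
      cos (2 * l * (π * k / m)) = ((Complex.exp (2 * π * Complex.I / m) ^ l) ^ k).re := by
    rw [← Complex.exp_nat_mul, ← Complex.exp_nat_mul, ← Complex.exp_ofReal_mul_I_re]
    congr 2
    push_cast
    ring
  simp_rw [hre, ← Complex.re_sum, geom_sum_eq hz, hzm, sub_self, zero_div, Complex.zero_re]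

lemma sum_range_cot_mul_sin {m j : ℕ} (hj : 0 < j) (hjm : j < m) :
    ∑ k ∈ range m, cot (π * k / m) * sin (2 * j * (π * k / m)) = m - 2 * j := by
  set F : ℕ → ℝ := fun k =>
    ∑ l ∈ range j, (cos (2 * l * (π * k / m)) + cos (2 * (l + 1) * (π * k / m)))
  have hF (k : ℕ) (hk : k ∈ (range m).erase 0) :
      cot (π * k / m) * sin (2 * j * (π * k / m)) = F k := by
    obtain ⟨hk0, hkm⟩ : k ≠ 0 ∧ k < m := by simpa using hk
    have hk : (0 : ℝ) < k := by exact_mod_cast Nat.pos_of_ne_zero hk0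
    have hm : (0 : ℝ) < m := by exact_mod_cast hk0.bot_lt.trans hkm
    have hsin : sin (π * k / m) ≠ 0 := by
      refine (sin_pos_of_pos_of_lt_pi (by positivity) ?_).ne'
      rw [div_lt_iff₀ hm]
      exact mul_lt_mul_of_pos_left (by exact_mod_cast hkm) pi_pos
    rw [cot_eq_cos_div_sin, div_mul_eq_mul_div, div_eq_iff hsin, mul_comm (cos _),
      sin_two_nat_mul_mul_cos, mul_comm]
  have hF0 : F 0 = 2 * j := by simp [F]; ring
  have hcos (l : ℕ) (hl : 0 < l) (hlm : l < m) : ∑ k ∈ range m, cos (2 * l * (π * k / m)) = 0 :=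
    sum_range_cos_two_mul_pi_mul_div fun h => (Nat.le_of_dvd hl h).not_gt hlm
  calc ∑ k ∈ range m, cot (π * k / m) * sin (2 * j * (π * k / m))
      = ∑ k ∈ range m, F k - F 0 := by
        rw [← sum_erase_eq_sub (by simp; omega), ← sum_congr rfl hF]
        exact (sum_erase _ (by simp)).symm
    _ = ∑ l ∈ range j, ∑ k ∈ range m, cos (2 * l * (π * k / m))
          + ∑ l ∈ range j, ∑ k ∈ range m, cos (2 * (l + 1 : ℕ) * (π * k / m)) - 2 * j := by
        simp only [F, hF0, sum_comm (s := range m), ← sum_add_distrib, Nat.cast_add, Nat.cast_one]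
    _ = m - 2 * j := by
        obtain ⟨i, rfl⟩ : ∃ i, j = i + 1 := ⟨j - 1, by omega⟩
        rw [sum_range_succ', sum_eq_zero fun l hl => hcos (l + 1) l.succ_pos (by simp at hl; omega),
          sum_eq_zero fun l hl => hcos (l + 1) l.succ_pos (by simp at hl; omega)]
        simp

end Real

lemma Function.Periodic.sum_range_comp_mul {M : Type*} [AddCommMonoid M] {f : ℕ → M} {m b c : ℕ}
    (hf : Periodic f m) (hbc : b * c ≡ 1 [MOD m]) :
    ∑ k ∈ range m, f (k * b) = ∑ k ∈ range m, f k := by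
  have hinv {x y : ℕ} (hxy : x * y ≡ 1 [MOD m]) (k : ℕ) (hk : k ∈ range m) :
      k * x % m * y % m = k := by
    rw [Nat.mod_mul_mod, mul_assoc, (hxy.mul_left k : k * (x * y) % m = k * 1 % m), mul_one,
      Nat.mod_eq_of_lt (mem_range.1 hk)]
  refine sum_nbij' (· * b % m) (· * c % m) (fun k hk => ?_) (fun k hk => ?_) (hinv hbc)
    (hinv (mul_comm b c ▸ hbc)) fun k _ => (hf.map_mod_nat _).symm
  all_goals exact mem_range.2 (Nat.mod_lt _ (Nat.zero_lt_of_lt (mem_range.1 hk)))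

lemma Function.Periodic.sum_range_mul_comp_mul {R : Type*} [CommSemiring R] {f g : ℕ → R}
    {m b c : ℕ} (hf : Periodic f m) (hg : Periodic g m) (hbc : b * c ≡ 1 [MOD m]) :
    ∑ k ∈ range m, f (k * b) * g k = ∑ k ∈ range m, f k * g (k * c) := by
  have hg_inv (k : ℕ) : g (k * b * c) = g k := by
    rw [← hg.map_mod_nat, mul_assoc, (hbc.mul_left k : k * (b * c) % m = k * 1 % m), mul_one,
      hg.map_mod_nat]
  have hgc : Periodic g (c * m) := by simpa using hg.nat_mul c
  have hperiodic : Periodic (fun k => f k * g (k * c)) m := fun k => by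
    simp only [hf k, add_mul, mul_comm m c, hgc (k * c)]
  simpa only [hg_inv] using hperiodic.sum_range_comp_mul hbc

lemma fsTerm_natCast_mul {m B c : ℕ} (hcm : c < m) (hBc : B * c % m = 1) :
    fsTerm (m * B) m = 1 - 2 * c / m := by
  have hm : 1 < m := by obtain _ | _ | m := m <;> omega
  have hc : 0 < c := Nat.pos_of_ne_zero (by rintro rfl; simp at hBc)
  have hmR : (m : ℝ) ≠ 0 := by positivity
  have hcot : Periodic (fun k : ℕ => cot (π * k / m)) m := fun k => by
    dsimp only
    rw [show π * ((k + m : ℕ) : ℝ) / m = π * k / m + π by push_cast; field_simp]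
    exact Real.cot_periodic _
  have hsin : Periodic (fun k : ℕ => sin (2 * (π * k / m))) m := fun k => by
    dsimp only
    rw [show 2 * (π * ((k + m : ℕ) : ℝ) / m) = 2 * (π * k / m) + 2 * π by push_cast; field_simp]
    exact Real.sin_periodic _
  have hterm (k : ℕ) :
      cot (π * k * (m * B) / m ^ 2) * cot (π * k / m) * sin (π * k / m) ^ 2
        = cot (π * (k * B : ℕ) / m) * sin (2 * (π * k / m)) / 2 := by
    rw [mul_assoc, Real.cot_mul_sin_sq, ← mul_div_assoc]
    congr 3
    push_cast
    field_simp
  have hIcc : Icc 1 (m - 1) = (range m).erase 0 := by ext; simp; omega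
  unfold fsTerm
  rw [sum_congr rfl fun k _ => hterm k, ← sum_div, hIcc, sum_erase _ (by simp),
    hcot.sum_range_mul_comp_mul hsin ((Nat.mod_eq_of_lt hm).symm ▸ hBc)]
  rw [sum_congr rfl fun k _ => ?_, Real.sum_range_cot_mul_sin hc hcm]
  · field_simp
  · push_cast
    ring_nf

section ProdErase

variable {ι : Type*} [Fintype ι] [DecidableEq ι]

lemma prod_dvd_sum_prod_erase_mul_sub_one {R : Type*} [CommRing R] {a c : ι → R}
    (hcop : Pairwise (IsCoprime on a)) (hc : ∀ i, a i ∣ (∏ j ∈ univ.erase i, a j) * c i - 1) :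
    ∏ i, a i ∣ ∑ i, (∏ j ∈ univ.erase i, a j) * c i - 1 := by
  refine Fintype.prod_dvd_of_coprime hcop fun i => ?_
  rw [← add_sum_erase _ _ (mem_univ i), add_sub_right_comm]
  refine dvd_add (hc i) (dvd_sum fun j hj => dvd_mul_of_dvd_left (dvd_prod_of_mem _ ?_) _)
  exact mem_erase.2 ⟨(ne_of_mem_erase hj).symm, mem_univ i⟩

lemma sum_prod_erase_mul_add_card_le {a c : ι → ℕ} (hc : ∀ i, c i < a i) :
    ∑ i, (∏ j ∈ univ.erase i, a j) * c i + Fintype.card ι ≤ Fintype.card ι * ∏ i, a i := by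
  have hterm (i : ι) : (∏ j ∈ univ.erase i, a j) * c i + 1 ≤ ∏ j, a j := by
    have hB : 1 ≤ ∏ j ∈ univ.erase i, a j := Nat.one_le_iff_ne_zero.2 <|
      prod_ne_zero_iff.2 fun j _ => (hc j).ne_bot
    rw [← prod_erase_mul univ a (mem_univ i)]
    calc (∏ j ∈ univ.erase i, a j) * c i + 1 ≤ (∏ j ∈ univ.erase i, a j) * (c i + 1) := by
          rw [mul_add_one]; omega
      _ ≤ (∏ j ∈ univ.erase i, a j) * a i := Nat.mul_le_mul_left _ (hc i)
  calc ∑ i, (∏ j ∈ univ.erase i, a j) * c i + Fintype.card ι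
      = ∑ i, ((∏ j ∈ univ.erase i, a j) * c i + 1) := by simp [sum_add_distrib]
    _ ≤ ∑ _i : ι, ∏ j, a j := sum_le_sum fun i _ => hterm i
    _ = Fintype.card ι * ∏ j, a j := by simp

end ProdErase

lemma FSR_eq_of_mul_mod_eq_one {n : ℕ} {a c : Fin n → ℕ} (hc : ∀ i, c i < a i)
    (hinv : ∀ i, (∏ j ∈ univ.erase i, a j) * c i % a i = 1) :
    FSR n a =
      2 * n - 3 - 2 * (∑ i, (∏ j ∈ univ.erase i, (a j : ℝ)) * c i - 1) / ∏ i, (a i : ℝ) := by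
  have ha (i : Fin n) : (a i : ℝ) ≠ 0 := Nat.cast_ne_zero.2 (hc i).ne_bot
  have hterm (i : Fin n) : fsTerm (∏ j, (a j : ℝ)) (a i)
      = 1 - 2 * ((∏ j ∈ univ.erase i, (a j : ℝ)) * c i) / ∏ j, (a j : ℝ) := by
    have h := fsTerm_natCast_mul (hc i) (hinv i)
    push_cast at h
    rw [← mul_prod_erase univ (fun j => (a j : ℝ)) (mem_univ i), h]
    have : ∏ j ∈ univ.erase i, (a j : ℝ) ≠ 0 := prod_ne_zero_iff.2 fun j _ => ha j
    field_simp
  have hA : ∏ i, (a i : ℝ) ≠ 0 := prod_ne_zero_iff.2 fun i _ => ha i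
  unfold FSR
  rw [sum_congr rfl fun i _ => hterm i, sum_sub_distrib, ← sum_div, ← mul_sum]
  simp only [sum_const, card_univ, Fintype.card_fin, nsmul_eq_mul, mul_one]
  field_simp
  ring

theorem stmt_15_general (n : ℕ) (a : Fin n → ℕ)
    (ha2 : ∀ i, 2 ≤ a i)
    (hcop : ∀ i j, i ≠ j → Nat.Coprime (a i) (a j)) :
    ∃ m : ℕ, FSR n a = 2 * (m : ℝ) - 1 := by
  choose c hca hinv using fun i => Nat.exists_mul_mod_eq_one_of_coprime
    (Nat.Coprime.prod_left fun j hj => hcop j i (ne_of_mem_erase hj)) (ha2 i)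
  obtain ⟨t, ht⟩ : ∏ i, (a i : ℤ) ∣ ∑ i, (∏ j ∈ univ.erase i, (a j : ℤ)) * c i - 1 := by
    refine prod_dvd_sum_prod_erase_mul_sub_one
      (fun i j hij => Nat.isCoprime_iff_coprime.2 (hcop i j hij)) fun i => ?_
    exact_mod_cast Nat.modEq_iff_dvd.1 ((Nat.mod_eq_of_lt (ha2 i)).trans (hinv i).symm)
  have htn : t < n := by
    have hA : 0 < ∏ i, (a i : ℤ) := prod_pos fun i _ => by have := ha2 i; positivity
    have hS : ∑ i, (∏ j ∈ univ.erase i, (a j : ℤ)) * c i + n ≤ n * ∏ i, (a i : ℤ) := by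
      exact_mod_cast Fintype.card_fin n ▸ sum_prod_erase_mul_add_card_le hca
    exact lt_of_mul_lt_mul_left (by linarith) hA.le
  obtain ⟨m, hm⟩ := Int.eq_ofNat_of_zero_le (by omega : 0 ≤ (n : ℤ) - 1 - t)
  have htR : ∑ i, (∏ j ∈ univ.erase i, (a j : ℝ)) * c i - 1 = (∏ i, (a i : ℝ)) * t := by
    exact_mod_cast ht
  have hA : ∏ i, (a i : ℝ) ≠ 0 := prod_ne_zero_iff.2 fun i _ => by have := ha2 i; positivity
  refine ⟨m, ?_⟩
  rw [FSR_eq_of_mul_mod_eq_one hca hinv, htR, mul_div_assoc, mul_div_cancel_left₀ _ hA,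
    show (m : ℝ) = n - 1 - t by exact_mod_cast hm.symm]
  ring

/-- For `n ≥ 3` and pairwise coprime integers `a₁, …, aₙ` with `aᵢ ≥ 2`, the real number
`R(a₁,…,aₙ)` is an odd integer not smaller than `-1`: there is an integer `m ≥ 0` with
`R(a₁,…,aₙ) = 2m - 1`. -/
theorem stmt_15 (n : ℕ) (hn : 3 ≤ n) (a : Fin n → ℕ)
    (ha2 : ∀ i, 2 ≤ a i)
    (hcop : ∀ i j, i ≠ j → Nat.Coprime (a i) (a j)) :
    ∃ m : ℕ, FSR n a = 2 * (m : ℝ) - 1 :=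
  stmt_15_general n a ha2 hcop
end
end
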